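/- For every n ≥ 2, the rational-number identity X̃_n(2,2) = (1/216)·{ (n−2)(81n³−728n²+1487n−240) + 72(3n²−9n+2)·∑_{k=1}^{n−2} 1/k }·(n−2)! holds, where ∑_{k=1}^{n−2} 1/k is the (n−2)-nd harmonic number. -/

import Mathlib

/-!
In the shifted variable the recurrence reads
`X̃_{n+1}(h, p) = (n + 1 - h) (X̃_n(h - 1, p) + X̃_n(h, p)) + 2h X̃_n(h, p - 1)`,
and `X̃` vanishes for `h < 0`, for `p < 0`, and at `h = 0, p > 0`. So for each fixed `(h, p)`
it is a first-order linear recurrence in `n` whose inhomogeneous part involves only pairs below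
`(h, p)`. Solving it successively for `(0,0), (1,0), (1,1), (1,2), (2,0), (2,1), (2,2)` gives
closed forms `n! · polynomial`; the harmonic numbers enter at `(1,2)`, where dividing the
recurrence by `n!` turns the inhomogeneous term `2 X̃_n(1,1)` into a polynomial plus a multiple
of `1/n`.
-/

/-- Refined counting numbers `Xtab n h p`: `Xtab 1 2 0 = 1`, zero off `(2,0)` at `n = 1`, and
`Xtab n h p = (2n+1-h)·(Xtab (n-1) (h-2) p + Xtab (n-1) (h-1) p) + 2(h-1-n)·Xtab (n-1) (h-1) (p-1)`
for `n ≥ 2`.  `Xtab n h p` counts generalized tree-like tableaux of size `n`, half-perimeter `h`,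
with exactly `p` off-diagonal points attached to a diagonal point. -/
def Xtab : ℕ → ℤ → ℤ → ℤ
  | 0, _, _ => 0
  | 1, h, p => if h = 2 ∧ p = 0 then 1 else 0
  | n + 2, h, p =>
      (2 * ((n : ℤ) + 2) + 1 - h) * (Xtab (n + 1) (h - 2) p + Xtab (n + 1) (h - 1) p)
        + 2 * (h - 1 - ((n : ℤ) + 2)) * Xtab (n + 1) (h - 1) (p - 1)

open scoped Nat

def Xtilde (n : ℕ) (h p : ℤ) : ℚ := Xtab n (n + 1 + h) p

lemma Xtilde_zero (h p : ℤ) : Xtilde 0 h p = 0 := by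
  simp [Xtilde, Xtab]

lemma Xtilde_one (h p : ℤ) : Xtilde 1 h p = if h = 0 ∧ p = 0 then 1 else 0 := by
  simp only [Xtilde, Xtab, Nat.cast_one, show (1 : ℤ) + 1 + h = 2 ↔ h = 0 by omega]
  split_ifs <;> rfl

lemma Xtilde_add_two (n : ℕ) (h p : ℤ) :
    Xtilde (n + 2) h p = (n + 2 - h) * (Xtilde (n + 1) (h - 1) p + Xtilde (n + 1) h p)
      + 2 * h * Xtilde (n + 1) h (p - 1) := by
  simp only [Xtilde]
  rw [Xtab,
    show ((n + 2 : ℕ) : ℤ) + 1 + h - 2 = ((n + 1 : ℕ) : ℤ) + 1 + (h - 1) by push_cast; ring,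
    show ((n + 2 : ℕ) : ℤ) + 1 + h - 1 = ((n + 1 : ℕ) : ℤ) + 1 + h by push_cast; ring]
  push_cast
  ring

lemma Xtilde_of_neg_left : ∀ (n : ℕ) {h : ℤ} (p : ℤ), h < 0 → Xtilde n h p = 0
  | 0, _, p, _ => Xtilde_zero _ p
  | 1, h, p, hh => by rw [Xtilde_one, if_neg (by omega)]
  | n + 2, h, p, hh => by
    rw [Xtilde_add_two, Xtilde_of_neg_left (n + 1) p (by omega),
      Xtilde_of_neg_left (n + 1) p hh, Xtilde_of_neg_left (n + 1) (p - 1) hh]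
    ring

lemma Xtilde_of_neg_right : ∀ (n : ℕ) (h : ℤ) {p : ℤ}, p < 0 → Xtilde n h p = 0
  | 0, h, _, _ => Xtilde_zero h _
  | 1, h, p, hp => by rw [Xtilde_one, if_neg (by omega)]
  | n + 2, h, p, hp => by
    rw [Xtilde_add_two, Xtilde_of_neg_right (n + 1) (h - 1) hp,
      Xtilde_of_neg_right (n + 1) h hp, Xtilde_of_neg_right (n + 1) h (p := p - 1) (by omega)]
    ring

lemma Xtilde_zero_of_pos : ∀ (n : ℕ) {p : ℤ}, 0 < p → Xtilde n 0 p = 0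
  | 0, _, _ => Xtilde_zero 0 _
  | 1, p, hp => by rw [Xtilde_one, if_neg (by omega)]
  | n + 2, p, hp => by
    rw [Xtilde_add_two, Xtilde_of_neg_left (n + 1) p (by omega), Xtilde_zero_of_pos (n + 1) hp]
    ring

lemma Xtilde_succ_zero_zero (m : ℕ) : Xtilde (m + 1) 0 0 = (m + 1)! := by
  induction m with
  | zero => simp [Xtilde_one]
  | succ m ih =>
    rw [Xtilde_add_two, ih, Xtilde_of_neg_left _ _ (by norm_num)]
    push_cast [Nat.factorial_succ]
    ring

lemma Xtilde_succ_one_zero (m : ℕ) : Xtilde (m + 1) 1 0 = (m + 1)! * m / 2 := by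
  induction m with
  | zero => simp [Xtilde_one]
  | succ m ih =>
    rw [Xtilde_add_two, ih, sub_self, Xtilde_succ_zero_zero, Xtilde_of_neg_right _ _ (by norm_num)]
    push_cast [Nat.factorial_succ]
    ring

lemma Xtilde_succ_one_one (m : ℕ) : Xtilde (m + 1) 1 1 = m ! * m * (m - 1) / 2 := by
  induction m with
  | zero => simp [Xtilde_one]
  | succ m ih =>
    rw [Xtilde_add_two, ih, sub_self, Xtilde_zero_of_pos _ one_pos, Xtilde_succ_one_zero]
    push_cast [Nat.factorial_succ]
    ring

lemma Xtilde_add_two_one_two (m : ℕ) :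
    Xtilde (m + 2) 1 2 = m ! * (m * (m ^ 2 - 2 * m - 7) / 2 + 2 * (m + 1) * harmonic m) := by
  induction m with
  | zero => simp [Xtilde_add_two, Xtilde_one]
  | succ m ih =>
    rw [Xtilde_add_two, ih, sub_self, Xtilde_zero_of_pos _ two_pos,
      show (2 : ℤ) - 1 = 1 by norm_num, Xtilde_succ_one_one, harmonic_succ]
    push_cast [Nat.factorial_succ]
    field_simp
    ring

lemma Xtilde_add_two_two_zero (m : ℕ) :
    Xtilde (m + 2) 2 0 = (m + 2)! * m * (3 * m + 1) / 24 := by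
  induction m with
  | zero => simp [Xtilde_add_two, Xtilde_one]
  | succ m ih =>
    rw [Xtilde_add_two, ih, show (2 : ℤ) - 1 = 1 by norm_num, Xtilde_succ_one_zero,
      Xtilde_of_neg_right _ _ (by norm_num)]
    push_cast [Nat.factorial_succ]
    ring

lemma Xtilde_add_two_two_one (m : ℕ) :
    Xtilde (m + 2) 2 1 = m ! * m * (m - 1) * (9 * m ^ 2 + 17 * m + 2) / 36 := by
  induction m with
  | zero => simp [Xtilde_add_two, Xtilde_one]
  | succ m ih =>
    rw [Xtilde_add_two, ih, show (2 : ℤ) - 1 = 1 by norm_num, sub_self, Xtilde_succ_one_one,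
      Xtilde_add_two_two_zero]
    push_cast [Nat.factorial_succ]
    ring

lemma Xtilde_add_two_two_two (m : ℕ) :
    Xtilde (m + 2) 2 2 = m ! / 216 *
      (m * (81 * (m + 2) ^ 3 - 728 * (m + 2) ^ 2 + 1487 * (m + 2) - 240)
        + 72 * (3 * (m + 2) ^ 2 - 9 * (m + 2) + 2) * harmonic m) := by
  induction m with
  | zero => simp [Xtilde_add_two, Xtilde_one]
  | succ m ih =>
    rw [Xtilde_add_two, ih, show (2 : ℤ) - 1 = 1 by norm_num, Xtilde_add_two_one_two,
      Xtilde_add_two_two_one, harmonic_succ]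
    push_cast [Nat.factorial_succ]
    field_simp
    ring

/-- For every n ≥ 2, X̃_n(2,2) = (1/216)·{(n−2)(81n³−728n²+1487n−240)
+ 72(3n²−9n+2)·∑_{k=1}^{n−2} 1/k}·(n−2)! in ℚ, where X̃_n(2,2) := X_n(n+3, 2). -/
theorem stmt19 (n : ℕ) (hn : 2 ≤ n) :
    ((Xtab n ((n : ℤ) + 3) 2 : ℤ) : ℚ)
      = (1 / 216) * (((n : ℚ) - 2)
            * (81 * (n : ℚ) ^ 3 - 728 * (n : ℚ) ^ 2 + 1487 * (n : ℚ) - 240)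
          + 72 * (3 * (n : ℚ) ^ 2 - 9 * (n : ℚ) + 2)
              * ∑ k ∈ Finset.Icc 1 (n - 2), (1 : ℚ) / (k : ℚ))
          * (Nat.factorial (n - 2) : ℚ) := by
  obtain ⟨m, rfl⟩ := Nat.exists_eq_add_of_le' hn
  have hclosed := Xtilde_add_two_two_two m
  simp only [Xtilde, show ((m + 2 : ℕ) : ℤ) + 1 + 2 = (m + 2 : ℕ) + 3 by ring] at hclosed
  simp only [Nat.add_sub_cancel, hclosed, harmonic_eq_sum_Icc, one_div]
  push_cast
  ring
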